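/- Let H be a Hopf k-algebra, (M, Δ_M) a right H-comodule, and (P, θ_P) a left H-contramodule which is projective in the sense that there is an H-contramodule homomorphism σ : P → Hom_k(H,P) (with the free contra-action on Hom_k(H,P)) satisfying θ_P ∘ σ = id_P. Then the contramodule (Hom_k(M,P), θ_diag), where θ_diag(Φ)(m) = θ_P(h ↦ Φ(m₍₁₎h)(m₍₀₎)), is a retract of a free H-contramodule: there exist a k-vector space W and H-contramodule homomorphisms s : Hom_k(M,P) → Hom_k(H,W) and p : Hom_k(H,W) → Hom_k(M,P), with the free contra-action on Hom_k(H,W), such that p ∘ s = id. -/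

import Mathlib

/-!
STATEMENT 10: If (P, θ_P) is a projective left H-contramodule (its contra-action splits by a
contramodule map σ : P → Hom_k(H,P)), then for any right H-comodule M the diagonal
contramodule (Hom_k(M,P), θ_diag) is a retract of a free H-contramodule.
-/

open TensorProduct LinearMap

noncomputable section

universe u v w x

variable (k : Type u) [Field k]
variable (H : Type v) [Semiring H] [HopfAlgebra k H]

def IsComodule {M : Type*} [AddCommGroup M] [Module k M]
    (ρ : M →ₗ[k] M ⊗[k] H) : Prop :=
  ((TensorProduct.assoc k M H H).toLinearMap ∘ₗ (TensorProduct.map ρ LinearMap.id) ∘ₗ ρ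
      = (TensorProduct.map LinearMap.id Coalgebra.comul) ∘ₗ ρ) ∧
  ((TensorProduct.rid k M).toLinearMap ∘ₗ
      (TensorProduct.map LinearMap.id Coalgebra.counit) ∘ₗ ρ = LinearMap.id)

def IsContramodule {B : Type*} [AddCommGroup B] [Module k B]
    (θ : (H →ₗ[k] B) →ₗ[k] B) : Prop :=
  (∀ Φ : H →ₗ[k] (H →ₗ[k] B),
      θ (θ ∘ₗ Φ) = θ ((TensorProduct.lift Φ.flip) ∘ₗ Coalgebra.comul)) ∧
  (∀ b : B, θ ((LinearMap.toSpanSingleton k B b) ∘ₗ Coalgebra.counit) = b)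

def IsContraHom {B D : Type*} [AddCommGroup B] [Module k B] [AddCommGroup D] [Module k D]
    (θB : (H →ₗ[k] B) →ₗ[k] B) (θD : (H →ₗ[k] D) →ₗ[k] D)
    (f : B →ₗ[k] D) : Prop :=
  ∀ φ : H →ₗ[k] B, f (θB φ) = θD (f ∘ₗ φ)

/-- The free contra-action on `Hom_k(H,V)`: `θ_free(Φ)(h) = Φ(h₍₂₎)(h₍₁₎)`. -/
def freeContra (V : Type*) [AddCommGroup V] [Module k V] :
    (H →ₗ[k] (H →ₗ[k] V)) →ₗ[k] (H →ₗ[k] V) :=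
  (LinearMap.lcomp k V (Coalgebra.comul (R := k) (A := H))) ∘ₗ
    (TensorProduct.uncurry (RingHom.id k) H H V) ∘ₗ (LinearMap.lflip.toLinearMap)

/-- The diagonal contra-action `θ_diag(Φ)(m) = θ_B(h ↦ Φ(m₍₁₎h)(m₍₀₎))` on `Hom_k(M,B)`. -/
def diagContra {M : Type*} [AddCommGroup M] [Module k M]
    {B : Type*} [AddCommGroup B] [Module k B]
    (ρ : M →ₗ[k] M ⊗[k] H) (θB : (H →ₗ[k] B) →ₗ[k] B) :
    (H →ₗ[k] (M →ₗ[k] B)) →ₗ[k] (M →ₗ[k] B) :=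
  (LinearMap.llcomp k M (H →ₗ[k] B) B θB) ∘ₗ
  (LinearMap.lcomp k (H →ₗ[k] B) ρ) ∘ₗ
  (TensorProduct.uncurry (RingHom.id k) M H (H →ₗ[k] B)) ∘ₗ
  (LinearMap.lflip.toLinearMap) ∘ₗ
  (LinearMap.llcomp k H (H →ₗ[k] (M →ₗ[k] B)) (M →ₗ[k] (H →ₗ[k] B)) LinearMap.lflip.toLinearMap) ∘ₗ
  (TensorProduct.lcurry (RingHom.id k) H H (M →ₗ[k] B)) ∘ₗ
  (LinearMap.lcomp k (M →ₗ[k] B) (LinearMap.mul' k H))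

/-!
Every right comodule `M` makes `Hom_k(M, X)` a contramodule, with contra-action
`contract F m = F(m₍₁₎)(m₍₀₎)`, whose contra-associativity and contra-unit axioms are
the coassociativity and counitality of `M`. In these terms `θ_diag = θ_B ∘ twist`, where
`twist Φ m h = Φ(m₍₁₎ h)(m₍₀₎)` is a contramodule map from the free contramodule
`Hom(H, Hom(M, B))` to the diagonal contramodule `Hom(M, Hom(H, B))`. Using the antipode,
`untwist φ h m = φ(m₍₀₎)(S(m₍₁₎) h)` inverts it, so for `B = Hom(H, P)` the diagonal
contramodule is free. Postcomposing with the splitting `σ` embeds `Hom(M, P)` into it, and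
postcomposing with `θ_P` retracts, because `θ_P ∘ σ = id`.
-/

section

variable {k H}

theorem freeContra_apply {V : Type*} [AddCommGroup V] [Module k V]
    (Φ : H →ₗ[k] (H →ₗ[k] V)) (h : H) :
    freeContra k H V Φ h = lift Φ.flip (Coalgebra.comul h) := rfl

section Contract

variable {M : Type*} [AddCommGroup M] [Module k M] (ρ : M →ₗ[k] M ⊗[k] H)

def contract (X : Type*) [AddCommGroup X] [Module k X] :
    (H →ₗ[k] (M →ₗ[k] X)) →ₗ[k] (M →ₗ[k] X) :=
  LinearMap.lcomp k X ρ ∘ₗ TensorProduct.uncurry (.id k) M H X ∘ₗ LinearMap.lflip.toLinearMap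

variable {ρ} {X Y : Type*} [AddCommGroup X] [Module k X] [AddCommGroup Y] [Module k Y]

theorem contract_apply (F : H →ₗ[k] (M →ₗ[k] X)) (m : M) :
    contract ρ X F m = lift F.flip (ρ m) := rfl

theorem comp_contract (f : X →ₗ[k] Y) (F : H →ₗ[k] (M →ₗ[k] X)) :
    f ∘ₗ contract ρ X F = contract ρ Y (LinearMap.llcomp k M X Y f ∘ₗ F) := by
  ext m
  simp only [LinearMap.comp_apply, contract_apply]
  induction ρ m using TensorProduct.induction_on <;> simp_all

theorem IsComodule.isContramodule_contract (hM : IsComodule k H ρ) :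
    IsContramodule k H (contract ρ X) := by
  constructor
  · intro Φ
    have hl : lift (contract ρ X ∘ₗ Φ).flip =
        lift (lift Φ.flip).flip ∘ₗ (TensorProduct.assoc k M H H).toLinearMap ∘ₗ
          map ρ LinearMap.id := by
      refine TensorProduct.ext' fun m x => ?_
      simp only [lift.tmul, LinearMap.flip_apply, LinearMap.comp_apply, contract_apply, map_tmul,
        LinearEquiv.coe_coe, LinearMap.id_apply]
      induction ρ m using TensorProduct.induction_on <;> simp_all [add_tmul]
    have hr : lift (lift Φ.flip ∘ₗ Coalgebra.comul).flip =
        lift (lift Φ.flip).flip ∘ₗ map LinearMap.id Coalgebra.comul := by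
      refine TensorProduct.ext' fun m x => ?_
      simp
    ext m
    rw [contract_apply, contract_apply, hl, hr]
    exact congr(lift (lift Φ.flip).flip ($(hM.1) m))
  · intro f
    have hf : lift (LinearMap.toSpanSingleton k (M →ₗ[k] X) f ∘ₗ
        Coalgebra.counit (A := H)).flip =
        f ∘ₗ (TensorProduct.rid k M).toLinearMap ∘ₗ map LinearMap.id Coalgebra.counit := by
      refine TensorProduct.ext' fun m x => ?_
      simp
    ext m
    rw [contract_apply, hf]
    exact congr(f ($(hM.2) m))

end Contract

section Twist

variable {M : Type*} [AddCommGroup M] [Module k M] (ρ : M →ₗ[k] M ⊗[k] H)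
variable (B : Type*) [AddCommGroup B] [Module k B]

-- Spelled like the tail of `diagContra`, so that `diagContra_eq_llcomp_twist` is `rfl`.
def twist : (H →ₗ[k] (M →ₗ[k] B)) →ₗ[k] (M →ₗ[k] (H →ₗ[k] B)) :=
  contract ρ (H →ₗ[k] B) ∘ₗ
  LinearMap.llcomp k H (H →ₗ[k] (M →ₗ[k] B)) (M →ₗ[k] (H →ₗ[k] B))
    LinearMap.lflip.toLinearMap ∘ₗ
  TensorProduct.lcurry (.id k) H H (M →ₗ[k] B) ∘ₗ
  LinearMap.lcomp k (M →ₗ[k] B) (LinearMap.mul' k H)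

def untwist : (M →ₗ[k] (H →ₗ[k] B)) →ₗ[k] (H →ₗ[k] (M →ₗ[k] B)) where
  toFun φ := contract ρ B ∘ₗ
    ((LinearMap.mul k H).flip.compl₂ (HopfAlgebra.antipode k)).compr₂ φ.flip
  map_add' _ _ := by
    ext h : 1
    simp only [LinearMap.comp_apply, LinearMap.add_apply, ← map_add]
    congr 1
  map_smul' _ _ := by
    ext h : 1
    simp only [LinearMap.comp_apply, LinearMap.smul_apply, RingHom.id_apply, ← map_smul]
    congr 1
    ext
    simp

variable {ρ B}

theorem diagContra_eq_llcomp_twist (θB : (H →ₗ[k] B) →ₗ[k] B) :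
    diagContra k H ρ θB = LinearMap.llcomp k M (H →ₗ[k] B) B θB ∘ₗ twist ρ B := rfl

theorem twist_apply (Φ : H →ₗ[k] (M →ₗ[k] B)) (m : M) (h : H) :
    twist ρ B Φ m h = contract ρ B (Φ ∘ₗ LinearMap.mulRight k h) m := by
  simp only [twist, contract_apply, LinearMap.comp_apply]
  induction ρ m using TensorProduct.induction_on <;> simp_all

theorem flip_twist (Φ : H →ₗ[k] (M →ₗ[k] B)) :
    (twist ρ B Φ).flip = contract ρ B ∘ₗ (LinearMap.mul k H).flip.compr₂ Φ := by
  ext h m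
  exact twist_apply Φ m h

theorem untwist_apply (φ : M →ₗ[k] (H →ₗ[k] B)) :
    untwist ρ B φ = contract ρ B ∘ₗ
      ((LinearMap.mul k H).flip.compl₂ (HopfAlgebra.antipode k)).compr₂ φ.flip :=
  rfl

theorem twist_llcomp {C : Type*} [AddCommGroup C] [Module k C] (f : B →ₗ[k] C)
    (Φ : H →ₗ[k] (M →ₗ[k] B)) :
    twist ρ C (LinearMap.llcomp k M B C f ∘ₗ Φ) =
      LinearMap.llcomp k M (H →ₗ[k] B) (H →ₗ[k] C) (LinearMap.llcomp k H B C f)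
        (twist ρ B Φ) := by
  ext m h
  simp only [twist_apply, LinearMap.llcomp_apply]
  rw [← LinearMap.comp_apply f, comp_contract]
  rfl

theorem twist_twist_apply (ψ : H →ₗ[k] (H →ₗ[k] (M →ₗ[k] B))) (m : M) (y l : H) :
    twist ρ (H →ₗ[k] B) (twist ρ B ∘ₗ ψ) m y l = contract ρ B (contract ρ B ∘ₗ
      (ψ ∘ₗ LinearMap.mulRight k y).compl₂ (LinearMap.mulRight k l)) m := by
  rw [twist_apply, ← LinearMap.applyₗ_apply_apply (R := k) l, ← LinearMap.comp_apply,
    comp_contract]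
  congr 2
  ext x m'
  exact twist_apply _ m' l

variable (hM : IsComodule k H ρ)
include hM

theorem IsComodule.twist_untwist (φ : M →ₗ[k] (H →ₗ[k] B)) :
    twist ρ B (untwist ρ B φ) = φ := by
  ext m h
  set Ψ := ((LinearMap.mul k H).flip.compl₂ (HopfAlgebra.antipode k)).compr₂ φ.flip ∘ₗ
    LinearMap.mulRight k h
  have hΨ : lift Ψ.flip ∘ₗ Coalgebra.comul =
      LinearMap.toSpanSingleton k (M →ₗ[k] B) (φ.flip h) ∘ₗ Coalgebra.counit := by
    have : lift Ψ.flip = φ.flip ∘ₗ LinearMap.mulRight k h ∘ₗ LinearMap.mul' k H ∘ₗ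
        (HopfAlgebra.antipode k).rTensor H := by
      ext a b
      simp [Ψ, mul_assoc]
    ext y
    simp [this, Algebra.algebraMap_eq_smul_one]
  rw [twist_apply, untwist_apply, LinearMap.comp_assoc, (hM.isContramodule_contract).1 Ψ, hΨ,
    (hM.isContramodule_contract).2]
  rfl

theorem IsComodule.untwist_twist (Φ : H →ₗ[k] (M →ₗ[k] B)) :
    untwist ρ B (twist ρ B Φ) = Φ := by
  ext h m
  set Ψ := (LinearMap.mul k H).flip.compr₂ Φ ∘ₗ LinearMap.mulRight k h ∘ₗ
    HopfAlgebra.antipode k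
  have hΨ : lift Ψ.flip ∘ₗ Coalgebra.comul =
      LinearMap.toSpanSingleton k (M →ₗ[k] B) (Φ h) ∘ₗ Coalgebra.counit := by
    have : lift Ψ.flip = Φ ∘ₗ LinearMap.mulRight k h ∘ₗ LinearMap.mul' k H ∘ₗ
        (HopfAlgebra.antipode k).lTensor H := by
      ext a b
      simp [Ψ, mul_assoc]
    ext y
    simp [this, Algebra.algebraMap_eq_smul_one]
  have hflip : ((LinearMap.mul k H).flip.compl₂ (HopfAlgebra.antipode k)).compr₂
      (twist ρ B Φ).flip h = contract ρ B ∘ₗ Ψ := by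
    rw [flip_twist]
    rfl
  rw [untwist_apply, LinearMap.comp_apply, hflip, (hM.isContramodule_contract).1 Ψ, hΨ,
    (hM.isContramodule_contract).2]

open Coalgebra in
theorem IsComodule.isContraHom_twist :
    IsContraHom k H (freeContra k H (M →ₗ[k] B)) (diagContra k H ρ (freeContra k H B))
      (twist ρ B) := by
  intro ψ
  ext m h
  let r := ℛ k h
  set Ψ := ∑ i ∈ r.index,
    (ψ ∘ₗ LinearMap.mulRight k (r.right i)).compl₂ (LinearMap.mulRight k (r.left i))
  have hR : freeContra k H B (twist ρ (H →ₗ[k] B) (twist ρ B ∘ₗ ψ) m) h =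
      contract ρ B (contract ρ B ∘ₗ Ψ) m := by
    rw [freeContra_apply, ← r.eq, map_sum]
    simp only [lift.tmul, LinearMap.flip_apply, twist_twist_apply]
    rw [← LinearMap.sum_apply, ← map_sum]
    congr 2
    ext
    simp [Ψ]
  have hL : freeContra k H (M →ₗ[k] B) ψ ∘ₗ LinearMap.mulRight k h = lift Ψ.flip ∘ₗ comul := by
    have hΨ : lift Ψ.flip = lift ψ.flip ∘ₗ LinearMap.mulRight k (comul h) := by
      ext a b
      simp [Ψ, ← r.eq, Finset.mul_sum]
    ext y : 1
    simp [freeContra_apply, hΨ]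
  rw [twist_apply, hL, ← (hM.isContramodule_contract).1 Ψ, ← hR]
  rfl

end Twist

section ContraHom

variable {B C D : Type*} [AddCommGroup B] [Module k B] [AddCommGroup C] [Module k C]
  [AddCommGroup D] [Module k D]
  {θB : (H →ₗ[k] B) →ₗ[k] B} {θC : (H →ₗ[k] C) →ₗ[k] C} {θD : (H →ₗ[k] D) →ₗ[k] D}

theorem IsContraHom.comp {f : B →ₗ[k] C} {g : C →ₗ[k] D} (hf : IsContraHom k H θB θC f)
    (hg : IsContraHom k H θC θD g) : IsContraHom k H θB θD (g ∘ₗ f) := by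
  intro φ
  rw [LinearMap.comp_apply, hf, hg, LinearMap.comp_assoc]

theorem IsContraHom.inverse {f : B →ₗ[k] C} {g : C →ₗ[k] B} (hf : IsContraHom k H θB θC f)
    (hgf : g ∘ₗ f = LinearMap.id) (hfg : f ∘ₗ g = LinearMap.id) :
    IsContraHom k H θC θB g := by
  intro φ
  conv_lhs => rw [← LinearMap.id_comp φ, ← hfg, LinearMap.comp_assoc, ← hf,
    ← LinearMap.comp_apply, hgf, LinearMap.id_apply]

theorem IsContramodule.isContraHom_self (hB : IsContramodule k H θB) :
    IsContraHom k H (freeContra k H B) θB θB :=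
  fun φ ↦ (hB.1 φ).symm

theorem isContraHom_llcomp_freeContra (e : B →ₗ[k] C) :
    IsContraHom k H (freeContra k H B) (freeContra k H C) (LinearMap.llcomp k H B C e) := by
  intro φ
  ext h
  simp only [LinearMap.llcomp_apply, freeContra_apply]
  induction Coalgebra.comul (R := k) h using TensorProduct.induction_on <;> simp_all

theorem IsContraHom.llcomp_diagContra {M : Type*} [AddCommGroup M] [Module k M]
    (ρ : M →ₗ[k] M ⊗[k] H) {f : B →ₗ[k] C} (hf : IsContraHom k H θB θC f) :
    IsContraHom k H (diagContra k H ρ θB) (diagContra k H ρ θC) (LinearMap.llcomp k M B C f) := by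
  intro Φ
  ext m
  simp only [diagContra_eq_llcomp_twist, LinearMap.comp_apply, LinearMap.llcomp_apply,
    twist_llcomp]
  exact hf _

end ContraHom

end

theorem hom_into_projective_is_retract_of_free
    (M : Type w) [AddCommGroup M] [Module k M]
    (P : Type x) [AddCommGroup P] [Module k P]
    (ρ : M →ₗ[k] M ⊗[k] H) (hM : IsComodule k H ρ)
    (θP : (H →ₗ[k] P) →ₗ[k] P) (hP : IsContramodule k H θP)
    -- projectivity of `P`: the contra-action splits by a contramodule homomorphism σ
    (σ : P →ₗ[k] (H →ₗ[k] P))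
    (hσ : IsContraHom k H θP (freeContra k H P) σ)
    (hσsplit : θP ∘ₗ σ = LinearMap.id) :
    ∃ (W : Type (max u v w x)) (_ : AddCommGroup W) (_ : Module k W)
      (s : (M →ₗ[k] P) →ₗ[k] (H →ₗ[k] W))
      (p : (H →ₗ[k] W) →ₗ[k] (M →ₗ[k] P)),
      IsContraHom k H (diagContra k H ρ θP) (freeContra k H W) s ∧
      IsContraHom k H (freeContra k H W) (diagContra k H ρ θP) p ∧
      p ∘ₗ s = LinearMap.id := by
  let e : ULift.{max u v} (M →ₗ[k] P) ≃ₗ[k] (M →ₗ[k] P) := ULift.moduleEquiv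
  have hUntwist : IsContraHom k H (diagContra k H ρ (freeContra k H P))
      (freeContra k H (M →ₗ[k] P)) (untwist ρ P) :=
    (hM.isContraHom_twist).inverse (LinearMap.ext hM.untwist_twist)
      (LinearMap.ext hM.twist_untwist)
  refine ⟨_, inferInstance, inferInstance,
    LinearMap.llcomp k H _ _ e.symm.toLinearMap ∘ₗ untwist ρ P ∘ₗ LinearMap.llcomp k M P _ σ,
    diagContra k H ρ θP ∘ₗ LinearMap.llcomp k H _ _ e.toLinearMap, ?_, ?_, ?_⟩
  · exact ((hσ.llcomp_diagContra ρ).comp hUntwist).comp (isContraHom_llcomp_freeContra _)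
  · rw [diagContra_eq_llcomp_twist]
    exact (isContraHom_llcomp_freeContra _).comp
      ((hM.isContraHom_twist).comp (hP.isContraHom_self.llcomp_diagContra ρ))
  · have he : ∀ F : H →ₗ[k] (M →ₗ[k] P), LinearMap.llcomp k H _ _ e.toLinearMap
        (LinearMap.llcomp k H _ _ e.symm.toLinearMap F) = F := fun F ↦ by ext; simp
    ext φ : 1
    simp only [LinearMap.comp_apply, he, diagContra_eq_llcomp_twist, hM.twist_untwist]
    exact congr($hσsplit ∘ₗ φ)

end
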